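/- For all α, β, λ > 0 and all z ∈ ℂ with Re z > λ^{1/α}, the Laplace transform identity ∫_0^∞ e^{−zt} t^{β−1} E_{α,β}(−λ t^α) dt = z^{α−β}/(z^α + λ) holds. -/

import Mathlib

/-- The Mittag-Leffler function `E_{α,β}(z) = ∑_{k=0}^∞ z^k / Γ(αk + β)`, `z ∈ ℂ`. -/
noncomputable def mittagLefflerC (α β : ℝ) (z : ℂ) : ℂ :=
  ∑' k : ℕ, z ^ k / Complex.Gamma ((α * (k : ℝ) + β : ℝ) : ℂ)


open MeasureTheory Set Complex Filter

lemma intOnR {s x : ℝ} (hs : 0 < s) (hx : 0 < x) :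
    IntegrableOn (fun t : ℝ => t ^ (s - 1) * Real.exp (-(x * t))) (Ioi 0) := by
  have h1 := Real.GammaIntegral_convergent hs
  have h2 : IntegrableOn (fun t : ℝ => Real.exp (-(x * t)) * (x * t) ^ (s - 1)) (Ioi 0) := by
    have := (integrableOn_Ioi_comp_mul_left_iff
      (fun t : ℝ => Real.exp (-t) * t ^ (s - 1)) 0 hx).mpr (by simpa using h1)
    simpa using this
  have h3 := h2.const_mul (x ^ (1 - s))
  apply IntegrableOn.congr_fun h3 ?_ measurableSet_Ioi
  intro t ht
  rw [mem_Ioi] at ht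
  simp only []
  rw [Real.mul_rpow hx.le ht.le]
  rw [show x ^ (1-s) * (Real.exp (-(x * t)) * (x ^ (s-1) * t ^ (s-1)))
      = (x ^ (1-s) * x ^ (s-1)) * (t ^ (s-1) * Real.exp (-(x * t))) by ring,
    ← Real.rpow_add hx]
  norm_num

lemma measC (s : ℝ) (z : ℂ) :
    AEStronglyMeasurable (fun t : ℝ => ((t ^ (s - 1) : ℝ) : ℂ) * Complex.exp (-(z * t)))
      (volume.restrict (Ioi 0)) := by
  have hc : ContinuousOn (fun t : ℝ => ((t ^ (s - 1) : ℝ) : ℂ) * Complex.exp (-(z * t)))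
      (Ioi 0) := by
    apply ContinuousOn.mul
    · exact Complex.continuous_ofReal.comp_continuousOn fun t ht =>
        (Real.continuousAt_rpow_const t (s - 1) (Or.inl (ne_of_gt ht))).continuousWithinAt
    · exact (Complex.continuous_exp.comp
        ((continuous_const.mul Complex.continuous_ofReal).neg)).continuousOn
  exact hc.aestronglyMeasurable measurableSet_Ioi

lemma normC {s : ℝ} {z : ℂ} {t : ℝ} (ht : 0 < t) :
    ‖((t ^ (s - 1) : ℝ) : ℂ) * Complex.exp (-(z * t))‖
      = t ^ (s - 1) * Real.exp (-(z.re * t)) := by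
  rw [norm_mul, Complex.norm_exp, Complex.norm_real]
  congr 1
  · exact Real.norm_of_nonneg (Real.rpow_nonneg ht.le _)
  · congr 1
    simp [Complex.neg_re, Complex.mul_re]

lemma intOnC {s : ℝ} {z : ℂ} (hs : 0 < s) (hz : 0 < z.re) :
    IntegrableOn (fun t : ℝ => ((t ^ (s - 1) : ℝ) : ℂ) * Complex.exp (-(z * t))) (Ioi 0) := by
  apply Integrable.mono' (intOnR hs hz) (measC s z)
  filter_upwards [ae_restrict_mem measurableSet_Ioi] with t ht
  rw [normC ht]

lemma lapReal {s r : ℝ} (hs : 0 < s) (hr : 0 < r) :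
    ∫ t in Ioi (0:ℝ), ((t ^ (s - 1) : ℝ) : ℂ) * Complex.exp (-((r:ℂ) * t))
      = Complex.Gamma s * (r : ℂ) ^ (-(s : ℂ)) := by
  have h := Complex.integral_cpow_mul_exp_neg_mul_Ioi (a := (s : ℂ)) (by simpa using hs) hr
  have heq : ∀ t ∈ Ioi (0:ℝ),
      ((t ^ (s - 1) : ℝ) : ℂ) * Complex.exp (-((r:ℂ) * t))
        = (t : ℂ) ^ ((s : ℂ) - 1) * Complex.exp (-((r:ℂ) * t)) := by
    intro t ht
    rw [mem_Ioi] at ht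
    rw [Complex.ofReal_cpow ht.le]
    norm_num
  rw [setIntegral_congr_fun measurableSet_Ioi heq, h]
  rw [one_div, Complex.inv_cpow _ _ (by
    rw [Complex.arg_ofReal_of_nonneg hr.le]; exact Real.pi_pos.ne),
    ← Complex.cpow_neg, mul_comm]

lemma measC' (s : ℝ) (z : ℂ) :
    AEStronglyMeasurable
      (fun t : ℝ => ((t ^ (s - 1) : ℝ) : ℂ) * (-(t : ℂ) * Complex.exp (-(z * t))))
      (volume.restrict (Ioi 0)) := by
  have hc : ContinuousOn
      (fun t : ℝ => ((t ^ (s - 1) : ℝ) : ℂ) * (-(t : ℂ) * Complex.exp (-(z * t)))) (Ioi 0) := by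
    apply ContinuousOn.mul
    · exact Complex.continuous_ofReal.comp_continuousOn fun t ht =>
        (Real.continuousAt_rpow_const t (s - 1) (Or.inl (ne_of_gt ht))).continuousWithinAt
    · exact ((Complex.continuous_ofReal.neg).mul (Complex.continuous_exp.comp
        ((continuous_const.mul Complex.continuous_ofReal).neg))).continuousOn
  exact hc.aestronglyMeasurable measurableSet_Ioi

lemma lapC {s : ℝ} (hs : 0 < s) {z : ℂ} (hz : 0 < z.re) :
    ∫ t in Ioi (0:ℝ), ((t ^ (s - 1) : ℝ) : ℂ) * Complex.exp (-(z * t))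
      = Complex.Gamma s * z ^ (-(s : ℂ)) := by
  set U : Set ℂ := {w : ℂ | 0 < w.re} with hU
  have hUopen : IsOpen U := isOpen_lt continuous_const Complex.continuous_re
  set f : ℂ → ℂ := fun w => ∫ t in Ioi (0:ℝ), ((t ^ (s - 1) : ℝ) : ℂ) * Complex.exp (-(w * t))
    with hf
  set g : ℂ → ℂ := fun w => Complex.Gamma s * w ^ (-(s : ℂ)) with hg
  have hfd : ∀ w₀ ∈ U, DifferentiableAt ℂ f w₀ := by
    intro w₀ hw₀
    have hw₀' : 0 < w₀.re := hw₀
    set ε : ℝ := w₀.re / 2 with hε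
    have hε0 : 0 < ε := half_pos hw₀'
    have key := hasDerivAt_integral_of_dominated_loc_of_deriv_le
      (F := fun (w : ℂ) (t : ℝ) => ((t ^ (s - 1) : ℝ) : ℂ) * Complex.exp (-(w * t)))
      (F' := fun (w : ℂ) (t : ℝ) =>
        ((t ^ (s - 1) : ℝ) : ℂ) * (-(t : ℂ) * Complex.exp (-(w * t))))
      (x₀ := w₀) (s := Metric.ball w₀ ε) (μ := volume.restrict (Ioi 0))
      (bound := fun t => t ^ s * Real.exp (-(ε * t))) (Metric.ball_mem_nhds w₀ hε0)
      (Eventually.of_forall fun w => measC s w) (intOnC hs hw₀') (measC' s w₀) ?_ ?_ ?_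
    · exact key.2.differentiableAt
    · -- bound
      filter_upwards [ae_restrict_mem measurableSet_Ioi] with t ht w hw
      rw [mem_Ioi] at ht
      have hre : ε ≤ w.re := by
        have h1 : |(w - w₀).re| ≤ ‖w - w₀‖ := Complex.abs_re_le_norm _
        rw [Complex.sub_re] at h1
        rw [Metric.mem_ball, Complex.dist_eq] at hw
        have := (abs_le.mp (h1.trans hw.le)).1
        simp only [hε] at *
        linarith
      have h2 : ‖((t ^ (s - 1) : ℝ) : ℂ) * (-(t : ℂ) * Complex.exp (-(w * t)))‖
          = t ^ (s - 1) * (t * Real.exp (-(w.re * t))) := by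
        rw [norm_mul, norm_mul, norm_neg, Complex.norm_exp, Complex.norm_real, Complex.norm_real,
          Real.norm_of_nonneg (Real.rpow_nonneg ht.le _), Real.norm_of_nonneg ht.le]
        congr 2
        simp [Complex.mul_re]
      rw [h2, show t ^ (s - 1) * (t * Real.exp (-(w.re * t)))
          = t ^ (s - 1) * t ^ (1:ℝ) * Real.exp (-(w.re * t)) by
            rw [Real.rpow_one]; ring,
        ← Real.rpow_add ht, sub_add_cancel]
      have : Real.exp (-(w.re * t)) ≤ Real.exp (-(ε * t)) :=
        Real.exp_le_exp.mpr (by nlinarith)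
      have hts : 0 ≤ t ^ s := Real.rpow_nonneg ht.le s
      nlinarith
    · -- bound integrable
      have := intOnR (show (0:ℝ) < s + 1 by linarith) hε0
      exact (by simpa using this : IntegrableOn (fun t => t ^ s * Real.exp (-(ε * t))) (Ioi 0))
    · -- differentiability
      filter_upwards with t w hw
      have h1 : HasDerivAt (fun w : ℂ => -(w * (t : ℂ))) (-(t : ℂ)) w := by
        exact (hasDerivAt_mul_const (t : ℂ)).neg
      have h2 := h1.cexp
      have h3 := h2.const_mul ((t ^ (s - 1) : ℝ) : ℂ)
      exact h3.congr_deriv (by ring)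
  have hgd : ∀ w₀ ∈ U, DifferentiableAt ℂ g w₀ := by
    intro w₀ hw₀
    exact (differentiableAt_id.cpow (differentiableAt_const _)
      (Complex.mem_slitPlane_iff.mpr (Or.inl hw₀))).const_mul _
  have hfd' : DifferentiableOn ℂ f U := fun w hw => (hfd w hw).differentiableWithinAt
  have hgd' : DifferentiableOn ℂ g U := fun w hw => (hgd w hw).differentiableWithinAt
  have hfa : AnalyticOnNhd ℂ f U := hfd'.analyticOnNhd hUopen
  have hga : AnalyticOnNhd ℂ g U := hgd'.analyticOnNhd hUopen
  have h1U : (1 : ℂ) ∈ U := by simp [hU]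
  have hfreq : ∃ᶠ w in nhdsWithin (1 : ℂ) {(1:ℂ)}ᶜ, f w = g w := by
    have hseq : Tendsto (fun n : ℕ => ((1 + ((n:ℝ)+1)⁻¹ : ℝ) : ℂ)) atTop
        (nhdsWithin (1 : ℂ) {(1:ℂ)}ᶜ) := by
      apply tendsto_nhdsWithin_of_tendsto_nhds_of_eventually_within
      · have h0 : Tendsto (fun n : ℕ => (1 + ((n:ℝ)+1)⁻¹ : ℝ)) atTop (nhds 1) := by
          simpa using (tendsto_const_nhds (x := (1:ℝ))).add (tendsto_one_div_add_atTop_nhds_zero_nat (𝕜 := ℝ))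
        have := (Complex.continuous_ofReal.tendsto (1:ℝ)).comp h0
        simpa [Function.comp_def] using this
      · filter_upwards with n
        simp only [mem_compl_iff, mem_singleton_iff]
        intro h
        have h' := congrArg Complex.re h
        simp only [Complex.ofReal_re, Complex.one_re] at h'
        have : (0:ℝ) < ((n:ℝ)+1)⁻¹ := by positivity
        linarith
    refine hseq.frequently (Frequently.of_forall fun n => ?_)
    have hr : (0:ℝ) < 1 + ((n:ℝ)+1)⁻¹ := by positivity
    simpa [hf, hg] using lapReal hs hr
  exact hfa.eqOn_of_preconnected_of_frequently_eq hga
    (convex_halfSpace_re_gt 0).isPreconnected h1U hfreq hz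

theorem laplace_mittagLeffler' (α β lam : ℝ) (hα : 0 < α) (hβ : 0 < β) (hlam : 0 < lam)
    (z : ℂ) (hz : lam ^ (1 / α) < z.re) :
    ∫ t in Set.Ioi (0 : ℝ),
        Complex.exp (-(z * (t : ℂ))) * ((t ^ (β - 1) : ℝ) : ℂ) *
          (∑' k : ℕ, (((-(lam * t ^ α) : ℝ)) : ℂ) ^ k /
            Complex.Gamma ((α * (k : ℝ) + β : ℝ) : ℂ))
      = z ^ ((α : ℂ) - (β : ℂ)) / (z ^ (α : ℂ) + (lam : ℂ)) := by
  have hx0 : 0 < z.re := (Real.rpow_pos_of_pos hlam (1/α)).trans hz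
  have hz0 : z ≠ 0 := by intro h; rw [h] at hx0; simp at hx0
  set x : ℝ := z.re with hxdef
  have hxα : lam < x ^ α := by
    have h1 : (lam ^ (1/α)) ^ α < x ^ α :=
      Real.rpow_lt_rpow (Real.rpow_pos_of_pos hlam _).le hz hα
    rwa [← Real.rpow_mul hlam.le, one_div, inv_mul_cancel₀ hα.ne', Real.rpow_one] at h1
  have habs : lam < ‖z‖ ^ α := by
    refine hxα.trans_le (Real.rpow_le_rpow hx0.le (Complex.re_le_norm z) hα.le)
  have habs0 : 0 < ‖z‖ := norm_pos_iff.mpr hz0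
  -- the summands
  set s : ℕ → ℝ := fun k => α * (k : ℝ) + β with hsdef
  have hs : ∀ k, 0 < s k := fun k => by
    have : (0:ℝ) ≤ α * k := by positivity
    simp only [hsdef]; linarith
  set c : ℕ → ℂ := fun k => (((-lam) ^ k : ℝ) : ℂ) / Complex.Gamma ((s k : ℝ) : ℂ) with hcdef
  set F : ℕ → ℝ → ℂ := fun k t =>
    c k * (((t ^ (s k - 1) : ℝ) : ℂ) * Complex.exp (-(z * t))) with hFdef
  have hGk : ∀ k, Complex.Gamma ((s k : ℝ) : ℂ) ≠ 0 := fun k => by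
    rw [Complex.Gamma_ofReal]
    exact_mod_cast (Real.Gamma_pos_of_pos (hs k)).ne'
  -- rewrite integrand as a tsum
  have hcongr : ∀ t ∈ Ioi (0:ℝ),
      Complex.exp (-(z * (t : ℂ))) * ((t ^ (β - 1) : ℝ) : ℂ) *
          (∑' k : ℕ, (((-(lam * t ^ α) : ℝ)) : ℂ) ^ k /
            Complex.Gamma ((α * (k : ℝ) + β : ℝ) : ℂ))
        = ∑' k : ℕ, F k t := by
    intro t ht
    rw [mem_Ioi] at ht
    rw [← tsum_mul_left]
    congr 1
    funext k
    have hreal : (t ^ (β - 1) * (-(lam * t ^ α)) ^ k : ℝ)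
        = ((-lam) ^ k * t ^ (s k - 1) : ℝ) := by
      rw [show -(lam * t ^ α) = (-lam) * t ^ α by ring, mul_pow,
        ← Real.rpow_natCast (t ^ α) k, ← Real.rpow_mul ht.le,
        show s k - 1 = (β - 1) + α * (k:ℝ) by simp only [hsdef]; ring,
        Real.rpow_add ht]
      ring
    simp only [hFdef, hcdef]
    rw [div_eq_mul_inv, div_eq_mul_inv, ← Complex.ofReal_pow]
    rw [show Complex.exp (-(z * t)) * ((t ^ (β - 1) : ℝ) : ℂ) *
        ((((-(lam * t ^ α)) ^ k : ℝ) : ℂ) * (Complex.Gamma ((s k : ℝ) : ℂ))⁻¹)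
        = (((t ^ (β - 1) : ℝ) : ℂ) * (((-(lam * t ^ α)) ^ k : ℝ) : ℂ)) *
          (Complex.Gamma ((s k : ℝ) : ℂ))⁻¹ * Complex.exp (-(z * t)) by ring,
      ← Complex.ofReal_mul, hreal, Complex.ofReal_mul]
    ring
  rw [setIntegral_congr_fun measurableSet_Ioi hcongr]
  -- interchange sum and integral
  have hint : ∀ k, Integrable (F k) (volume.restrict (Ioi 0)) := fun k =>
    ((intOnC (hs k) hx0).const_mul (c k))
  have hnormc : ∀ k, ‖c k‖ = lam ^ k / Real.Gamma (s k) := fun k => by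
    rw [hcdef, norm_div, Complex.Gamma_ofReal, Complex.norm_real, Complex.norm_real,
      Real.norm_of_nonneg (Real.Gamma_pos_of_pos (hs k)).le]
    congr 1
    rw [Real.norm_eq_abs, _root_.abs_pow, _root_.abs_neg, _root_.abs_of_pos hlam]
  have hxinv : (0:ℝ) < 1 / x := by positivity
  have hval : ∀ k, (∫ t in Ioi (0:ℝ), ‖F k t‖) = lam ^ k * (1/x) ^ (s k) := by
    intro k
    have heq : ∀ t ∈ Ioi (0:ℝ), ‖F k t‖
        = (lam ^ k / Real.Gamma (s k)) * (t ^ (s k - 1) * Real.exp (-(x * t))) := by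
      intro t ht
      rw [mem_Ioi] at ht
      rw [hFdef]
      simp only []
      rw [norm_mul, hnormc k, normC ht]
    rw [setIntegral_congr_fun measurableSet_Ioi heq, integral_const_mul,
      Real.integral_rpow_mul_exp_neg_mul_Ioi (hs k) hx0]
    field_simp [(Real.Gamma_pos_of_pos (hs k)).ne']
  have hsum : Summable fun k => ∫ t in Ioi (0:ℝ), ‖F k t‖ := by
    have hterm : ∀ k, (∫ t in Ioi (0:ℝ), ‖F k t‖)
        = (1/x) ^ β * (lam * (1/x) ^ α) ^ k := by
      intro k
      rw [hval k, hsdef]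
      simp only []
      rw [Real.rpow_add hxinv, Real.rpow_mul hxinv.le, Real.rpow_natCast]
      ring
    have hr1 : lam * (1/x) ^ α < 1 := by
      rw [one_div, Real.inv_rpow hx0.le, ← div_eq_mul_inv]
      · rw [div_lt_one (Real.rpow_pos_of_pos hx0 α)]
        exact hxα
    have hr0 : (0:ℝ) ≤ lam * (1/x) ^ α := by positivity
    simp only [hterm]
    exact (summable_geometric_of_lt_one hr0 hr1).mul_left _
  rw [← MeasureTheory.integral_tsum_of_summable_integral_norm hint hsum]
  -- evaluate each integral
  set w : ℂ := -(lam : ℂ) * z ^ (-(α:ℂ)) with hwdef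
  have hterm : ∀ k, (∫ t in Ioi (0:ℝ), F k t) = z ^ (-(β:ℂ)) * w ^ k := by
    intro k
    rw [hFdef]
    simp only []
    rw [MeasureTheory.integral_const_mul, lapC (hs k) hx0]
    rw [show (-((s k : ℝ) : ℂ)) = ((k:ℕ):ℂ) * (-(α:ℂ)) + (-(β:ℂ)) by
        simp only [hsdef]; push_cast; ring,
      Complex.cpow_add _ _ hz0, Complex.cpow_nat_mul]
    rw [hcdef]
    simp only []
    rw [hwdef, mul_pow, Complex.ofReal_pow, Complex.ofReal_neg]
    field_simp [hGk k]
  simp only [hterm]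
  have hwnorm : ‖w‖ < 1 := by
    rw [hwdef, norm_mul, norm_neg, Complex.norm_real,
      Real.norm_of_nonneg hlam.le,
      Complex.norm_cpow_of_ne_zero hz0]
    simp only [Complex.neg_re, Complex.neg_im, Complex.ofReal_re, Complex.ofReal_im,
      neg_zero, mul_zero, Real.exp_zero, div_one]
    rw [Real.rpow_neg habs0.le, ← div_eq_mul_inv, div_lt_one (Real.rpow_pos_of_pos habs0 α)]
    exact habs
  rw [tsum_mul_left, tsum_geometric_of_norm_lt_one hwnorm]
  -- final algebra
  have hzα : z ^ (α:ℂ) ≠ 0 := by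
    rw [Complex.cpow_def_of_ne_zero hz0]; exact Complex.exp_ne_zero _
  have habsα : ‖z ^ (α:ℂ)‖ = ‖z‖ ^ α := by
    rw [Complex.norm_cpow_of_ne_zero hz0]
    simp
  have hden : z ^ (α:ℂ) + (lam:ℂ) ≠ 0 := by
    intro h
    have h2 : z ^ (α:ℂ) = -(lam:ℂ) := by linear_combination h
    have h3 := congrArg norm h2
    rw [habsα, norm_neg, Complex.norm_real, Real.norm_of_nonneg hlam.le] at h3
    linarith
  rw [hwdef, Complex.cpow_neg z (α:ℂ),
    show ((α:ℂ) - (β:ℂ)) = (α:ℂ) + (-(β:ℂ)) by ring, Complex.cpow_add _ _ hz0]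
  field_simp [hden]
  ring


/-- For all `α, β, λ > 0` and all `z ∈ ℂ` with `Re z > λ^{1/α}`, the Laplace transform
identity `∫_0^∞ e^{−zt} t^{β−1} E_{α,β}(−λ t^α) dt = z^{α−β}/(z^α + λ)` holds. -/
theorem laplace_mittagLeffler (α β lam : ℝ) (hα : 0 < α) (hβ : 0 < β) (hlam : 0 < lam)
    (z : ℂ) (hz : lam ^ (1 / α) < z.re) :
    ∫ t in Set.Ioi (0 : ℝ),
        Complex.exp (-(z * (t : ℂ))) * ((t ^ (β - 1) : ℝ) : ℂ) *
          mittagLefflerC α β (((-(lam * t ^ α) : ℝ)) : ℂ)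
      = z ^ ((α : ℂ) - (β : ℂ)) / (z ^ (α : ℂ) + (lam : ℂ)) := by
  simpa only [mittagLefflerC] using laplace_mittagLeffler' α β lam hα hβ hlam z hz
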